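/- Let f : ℝ^d → ℝ be L-smooth with L > 0, let x* be a global minimizer of f, and let x₀ ∈ ℝ^d satisfy |f(x₀) - f(x*)| ≤ R. On a probability space with filtration (F_t), suppose SGD is run for T iterations as follows: at each iteration t ∈ {1,…,T}, a stochastic gradient g_t = ∇f(x_{t-1}) + ξ_t is received, where the noise ξ_t satisfies E[ξ_t | F_{t-1}] = 0 and E[‖ξ_t‖² | F_{t-1}] ≤ σ² (with x_{t-1} being F_{t-1}-measurable and σ > 0), and the iterate is updated with the deterministic-in-the-gradient step size x_t = x_{t-1} - (1/L) · (‖∇f(x_{t-1})‖² / (‖∇f(x_{t-1})‖² + σ²)) · g_t. Then min_{t=1,…,T} E[‖∇f(x_t)‖²] ≤ 2LR/T + σ·√(2LR/T). -/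

import Mathlib

open MeasureTheory ProbabilityTheory
open scoped RealInnerProductSpace

/-!
With `u = ‖∇f‖² / (‖∇f‖² + σ²)` the step is `η = u / L`. Taking expectations in the descent lemma
`f(x - η(∇f + ξ)) ≤ f(x) - η⟪∇f, ∇f + ξ⟫ + (L/2) η² ‖∇f + ξ‖²`, the cross term `⟪∇f, ξ⟫` has
zero mean (its coefficient `u(1 - u)/L` is `F_{t-1}`-measurable and `u(1 - u)‖∇f‖ ≤ σ/2`) and
`‖ξ‖²` has conditional mean at most `σ²`; the identity `u (‖∇f‖² + σ²) = ‖∇f‖²` then gives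
`E f(x_t) ≤ E f(x_{t-1}) - E φ(∇f(x_{t-1})) / (2L)` with `φ(g) = u ‖g‖² = ‖g‖⁴ / (‖g‖² + σ²)`.
Telescoping, together with `‖∇f‖² ≤ 2L (f - f(x*))`, yields
`E ‖∇f(x_T)‖² + ∑_{s<T} E φ(∇f(x_s)) ≤ 2LR`.
Finally `‖g‖² ≤ φ(g) + σ √φ(g)` and Jensen for `√` give
`E ‖∇f(x_t)‖² ≤ E φ_t + σ √(E φ_t)`; if the bound failed for every `t ∈ [1, T]`, then
`E φ_t > 2LR/T` for `1 ≤ t < T` and `E ‖∇f(x_T)‖² > 2LR/T`, contradicting the telescoped sum.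
-/

section ConditionalExpectation

variable {Ω : Type*} {m m0 : MeasurableSpace Ω} {μ : Measure Ω}

theorem integral_bilin_eq_integral_bilin_condExp {F G H : Type*} [NormedAddCommGroup F]
    [NormedSpace ℝ F] [NormedAddCommGroup G] [NormedSpace ℝ G] [CompleteSpace G]
    [NormedAddCommGroup H] [NormedSpace ℝ H] [CompleteSpace H] [IsFiniteMeasure μ]
    (B : F →L[ℝ] G →L[ℝ] H) (hm : m ≤ m0) {v : Ω → F} {w : Ω → G}
    (hv : StronglyMeasurable[m] v) {C : ℝ} (hvC : ∀ ω, ‖v ω‖ ≤ C) (hw : Integrable w μ) :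
    ∫ ω, B (v ω) (w ω) ∂μ = ∫ ω, B (v ω) ((μ[w|m]) ω) ∂μ := by
  rw [← integral_condExp hm]
  exact integral_congr_ae
    (condExp_stronglyMeasurable_bilin_of_bound B hm hv hw C (ae_of_all _ hvC))

theorem integral_inner_eq_zero_of_condExp_eq_zero {E : Type*} [NormedAddCommGroup E]
    [InnerProductSpace ℝ E] [CompleteSpace E] [IsFiniteMeasure μ] (hm : m ≤ m0)
    {v w : Ω → E} (hv : StronglyMeasurable[m] v) {C : ℝ} (hvC : ∀ ω, ‖v ω‖ ≤ C)
    (hw : Integrable w μ) (hw0 : μ[w|m] =ᵐ[μ] 0) :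
    ∫ ω, ⟪v ω, w ω⟫ ∂μ = 0 := by
  have h : ∫ ω, ⟪v ω, w ω⟫ ∂μ = ∫ ω, ⟪v ω, (μ[w|m]) ω⟫ ∂μ :=
    integral_bilin_eq_integral_bilin_condExp (innerSL ℝ) hm hv hvC hw
  rw [h, integral_congr_ae (hw0.mono fun ω hω => by rw [hω, Pi.zero_apply, inner_zero_right])]
  exact integral_zero Ω ℝ

theorem integral_mul_sub_nonpos_of_condExp_le [IsFiniteMeasure μ] (hm : m ≤ m0)
    {h Y : Ω → ℝ} (hh : StronglyMeasurable[m] h) (hh0 : ∀ ω, 0 ≤ h ω) {C : ℝ}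
    (hhC : ∀ ω, h ω ≤ C) (hY : Integrable Y μ) {c : ℝ} (hYc : ∀ᵐ ω ∂μ, (μ[Y|m]) ω ≤ c) :
    ∫ ω, h ω * (Y ω - c) ∂μ ≤ 0 := by
  have hpull : ∫ ω, h ω * (Y ω - c) ∂μ = ∫ ω, h ω * (μ[fun ω => Y ω - c|m]) ω ∂μ :=
    integral_bilin_eq_integral_bilin_condExp (.mul ℝ ℝ) hm hh
      (fun ω => (Real.norm_of_nonneg (hh0 ω)).trans_le (hhC ω)) (hY.sub (integrable_const c))
  rw [hpull]
  refine integral_nonpos_of_ae ?_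
  filter_upwards [condExp_sub hY (integrable_const c) m, hYc] with ω hsub hω
  change h ω * μ[Y - fun _ => c|m] ω ≤ 0
  rw [hsub, Pi.sub_apply, condExp_const hm]
  exact mul_nonpos_of_nonneg_of_nonpos (hh0 ω) (sub_nonpos.2 hω)

theorem MeasureTheory.Integrable.sqrt [IsFiniteMeasure μ] {Y : Ω → ℝ} (hY0 : ∀ ω, 0 ≤ Y ω)
    (hY : Integrable Y μ) : Integrable (fun ω => √(Y ω)) μ :=
  ((memLp_two_iff_integrable_sq (Real.continuous_sqrt.comp_aestronglyMeasurable hY.1)).2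
    (hY.congr (ae_of_all _ fun ω => (Real.sq_sqrt (hY0 ω)).symm))).integrable one_le_two

theorem integral_sqrt_le_sqrt_integral [IsProbabilityMeasure μ] {Y : Ω → ℝ}
    (hY0 : ∀ ω, 0 ≤ Y ω) (hY : Integrable Y μ) :
    ∫ ω, √(Y ω) ∂μ ≤ √(∫ ω, Y ω ∂μ) :=
  Real.strictConcaveOn_sqrt.concaveOn.le_map_integral Real.continuous_sqrt.continuousOn
    isClosed_Ici (ae_of_all _ hY0) hY (hY.sqrt hY0)

end ConditionalExpectation

noncomputable def gradWeight {E : Type*} [Norm E] (σ : ℝ) (g : E) : ℝ :=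
  ‖g‖ ^ 2 / (‖g‖ ^ 2 + σ ^ 2)

section GradWeight

variable {E : Type*} [NormedAddCommGroup E] {Ω : Type*} {m0 : MeasurableSpace Ω}
  {μ : Measure Ω}

theorem gradWeight_nonneg (σ : ℝ) (g : E) : 0 ≤ gradWeight σ g := by
  unfold gradWeight
  positivity

theorem gradWeight_le_one (σ : ℝ) (g : E) : gradWeight σ g ≤ 1 :=
  div_le_one_of_le₀ (le_add_of_nonneg_right (sq_nonneg σ)) (by positivity)

theorem gradWeight_mul_add {σ : ℝ} (hσ : σ ≠ 0) (g : E) :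
    gradWeight σ g * (‖g‖ ^ 2 + σ ^ 2) = ‖g‖ ^ 2 :=
  div_mul_cancel₀ _ (by positivity)

theorem continuous_gradWeight {σ : ℝ} (hσ : σ ≠ 0) : Continuous (gradWeight σ : E → ℝ) :=
  (continuous_norm.pow 2).div (continuous_norm.pow 2 |>.add continuous_const)
    fun _ => by positivity

theorem norm_gradWeight_mul_one_sub_smul_le [NormedSpace ℝ E] {σ L : ℝ} (hL : 0 < L)
    (hσ : 0 < σ) (g : E) :
    ‖(gradWeight σ g * (1 - gradWeight σ g) / L) • g‖ ≤ σ / (2 * L) := by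
  have hD : 0 < ‖g‖ ^ 2 + σ ^ 2 := by positivity
  have h1u : 1 - gradWeight σ g = σ ^ 2 / (‖g‖ ^ 2 + σ ^ 2) := by
    unfold gradWeight
    field_simp
    ring
  rw [norm_smul, Real.norm_of_nonneg (by rw [h1u]; unfold gradWeight; positivity), h1u,
    gradWeight, div_mul_div_comm, div_div, div_mul_eq_mul_div,
    div_le_div_iff₀ (by positivity) (by positivity)]
  -- the gap is `σ L (σ² D + ‖g‖² (‖g‖ - σ)²)` with `D = ‖g‖² + σ²`
  nlinarith [mul_nonneg (mul_nonneg hσ.le hL.le) (add_nonneg (mul_nonneg (sq_nonneg σ) hD.le)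
    (mul_nonneg (sq_nonneg ‖g‖) (sq_nonneg (‖g‖ - σ))))]

theorem sq_norm_le_gradWeight_mul_add_sqrt {σ : ℝ} (hσ : 0 < σ) (g : E) :
    ‖g‖ ^ 2 ≤ gradWeight σ g * ‖g‖ ^ 2 + σ * √(gradWeight σ g * ‖g‖ ^ 2) := by
  have hD : 0 < ‖g‖ ^ 2 + σ ^ 2 := by positivity
  have hsqrt : σ * ‖g‖ ^ 2 / (‖g‖ ^ 2 + σ ^ 2) ≤ √(gradWeight σ g * ‖g‖ ^ 2) := by
    rw [Real.le_sqrt (by positivity) (by unfold gradWeight; positivity), gradWeight, div_pow,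
      div_mul_eq_mul_div, div_le_div_iff₀ (by positivity) hD]
    nlinarith [mul_nonneg (pow_nonneg (sq_nonneg ‖g‖) 2) (sq_nonneg ‖g‖),
      mul_nonneg (mul_nonneg (pow_nonneg (sq_nonneg ‖g‖) 2) (sq_nonneg σ)) hD.le]
  calc ‖g‖ ^ 2 = gradWeight σ g * ‖g‖ ^ 2 + σ * (σ * ‖g‖ ^ 2 / (‖g‖ ^ 2 + σ ^ 2)) := by
        unfold gradWeight
        field_simp
    _ ≤ _ := by gcongr

theorem integrable_gradWeight_mul_sq_norm [IsFiniteMeasure μ] {σ : ℝ} (hσ : σ ≠ 0)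
    {G : Ω → E} (hG : AEStronglyMeasurable G μ) (hG2 : Integrable (fun ω => ‖G ω‖ ^ 2) μ) :
    Integrable (fun ω => gradWeight σ (G ω) * ‖G ω‖ ^ 2) μ :=
  integrable_of_le_of_le
    (((continuous_gradWeight hσ).mul (continuous_norm.pow 2)).comp_aestronglyMeasurable hG)
    (ae_of_all _ fun _ => mul_nonneg (gradWeight_nonneg σ _) (sq_nonneg _))
    (ae_of_all _ fun _ => mul_le_of_le_one_left (sq_nonneg _) (gradWeight_le_one σ _))
    (integrable_const 0) hG2

theorem integral_sq_norm_le_add_sqrt [IsProbabilityMeasure μ] {σ : ℝ} (hσ : 0 < σ)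
    {G : Ω → E} (hG : AEStronglyMeasurable G μ) (hG2 : Integrable (fun ω => ‖G ω‖ ^ 2) μ) :
    ∫ ω, ‖G ω‖ ^ 2 ∂μ ≤ ∫ ω, gradWeight σ (G ω) * ‖G ω‖ ^ 2 ∂μ
      + σ * √(∫ ω, gradWeight σ (G ω) * ‖G ω‖ ^ 2 ∂μ) := by
  have hφ0 : ∀ ω, 0 ≤ gradWeight σ (G ω) * ‖G ω‖ ^ 2 := fun ω =>
    mul_nonneg (gradWeight_nonneg σ _) (sq_nonneg _)
  have hφ := integrable_gradWeight_mul_sq_norm hσ.ne' hG hG2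
  calc ∫ ω, ‖G ω‖ ^ 2 ∂μ
      ≤ ∫ ω, (gradWeight σ (G ω) * ‖G ω‖ ^ 2 + σ * √(gradWeight σ (G ω) * ‖G ω‖ ^ 2)) ∂μ :=
        integral_mono hG2 (hφ.add ((hφ.sqrt hφ0).const_mul σ))
          fun ω => sq_norm_le_gradWeight_mul_add_sqrt hσ (G ω)
    _ = ∫ ω, gradWeight σ (G ω) * ‖G ω‖ ^ 2 ∂μ
          + σ * ∫ ω, √(gradWeight σ (G ω) * ‖G ω‖ ^ 2) ∂μ := by
        rw [integral_add hφ ((hφ.sqrt hφ0).const_mul σ), integral_const_mul]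
    _ ≤ _ := by
        gcongr
        exact integral_sqrt_le_sqrt_integral hφ0 hφ

end GradWeight

section SGD

variable {E : Type*} [NormedAddCommGroup E] [InnerProductSpace ℝ E] [CompleteSpace E]
  {f : E → ℝ} {L σ : ℝ} {Ω : Type*} {m m0 : MeasurableSpace Ω} {μ : Measure Ω}

theorem continuous_gradient_of_lipschitz
    (hsmooth : ∀ x y, ‖gradient f x - gradient f y‖ ≤ L * ‖x - y‖) :
    Continuous (gradient f) :=
  (LipschitzWith.of_dist_le' fun x y => by simpa only [dist_eq_norm] using hsmooth x y).continuous

theorem descent_lemma (hdiff : Differentiable ℝ f)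
    (hsmooth : ∀ x y, ‖gradient f x - gradient f y‖ ≤ L * ‖x - y‖) (x y : E) :
    f y ≤ f x + ⟪gradient f x, y - x⟫ + L / 2 * ‖y - x‖ ^ 2 := by
  set v := y - x
  let g : ℝ → ℝ := fun t => f (x + t • v) - t * ⟪gradient f x, v⟫ - t ^ 2 * (L / 2 * ‖v‖ ^ 2)
  have hg : ∀ t, HasDerivAt g
      (⟪gradient f (x + t • v) - gradient f x, v⟫ - t * (L * ‖v‖ ^ 2)) t := by
    intro t
    have hline : HasDerivAt (fun t : ℝ => x + t • v) v t := by
      simpa using ((hasDerivAt_id t).smul_const v).const_add x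
    have hf := (hdiff (x + t • v)).hasGradientAt.hasFDerivAt.comp_hasDerivAt t hline
    refine ((hf.sub (hasDerivAt_mul_const ⟪gradient f x, v⟫)).sub
      ((hasDerivAt_pow 2 t).mul_const (L / 2 * ‖v‖ ^ 2))).congr_deriv ?_
    simp only [InnerProductSpace.toDual_apply_apply, inner_sub_left]
    ring
  have hanti : AntitoneOn g (Set.Icc 0 1) := by
    refine antitoneOn_of_deriv_nonpos (convex_Icc 0 1)
      (fun t _ => (hg t).continuousAt.continuousWithinAt)
      (fun t _ => (hg t).differentiableAt.differentiableWithinAt) fun t ht => ?_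
    rw [interior_Icc] at ht
    rw [(hg t).deriv, sub_nonpos]
    calc ⟪gradient f (x + t • v) - gradient f x, v⟫
        ≤ ‖gradient f (x + t • v) - gradient f x‖ * ‖v‖ := real_inner_le_norm _ _
      _ ≤ L * ‖t • v‖ * ‖v‖ := by
          gcongr
          simpa using hsmooth (x + t • v) x
      _ = t * (L * ‖v‖ ^ 2) := by
          rw [norm_smul, Real.norm_of_nonneg ht.1.le]
          ring
  have h01 := hanti (by simp) (by simp) zero_le_one
  simp only [g, one_smul, zero_smul, add_zero, one_mul, one_pow, zero_mul, sub_zero,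
    ne_eq, OfNat.ofNat_ne_zero, not_false_eq_true, zero_pow] at h01
  rw [add_sub_cancel] at h01
  linarith

theorem sq_norm_gradient_le (hL : 0 < L) (hdiff : Differentiable ℝ f)
    (hsmooth : ∀ x y, ‖gradient f x - gradient f y‖ ≤ L * ‖x - y‖) {xstar : E}
    (hmin : ∀ y, f xstar ≤ f y) (x : E) :
    ‖gradient f x‖ ^ 2 ≤ 2 * L * (f x - f xstar) := by
  have h := descent_lemma hdiff hsmooth x (x - L⁻¹ • gradient f x)
  rw [sub_sub_cancel_left, inner_neg_right, real_inner_smul_right, real_inner_self_eq_norm_sq,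
    norm_neg, norm_smul, Real.norm_of_nonneg (inv_nonneg.2 hL.le)] at h
  have hdecr : ‖gradient f x‖ ^ 2 / (2 * L) ≤ f x - f xstar := by
    have hsq : L / 2 * (L⁻¹ * ‖gradient f x‖) ^ 2 = L⁻¹ * ‖gradient f x‖ ^ 2 / 2 := by
      field_simp
    rw [hsq] at h
    rw [div_eq_mul_inv, mul_inv, ← mul_assoc, mul_comm _ 2⁻¹]
    linarith [hmin (x - L⁻¹ • gradient f x)]
  rwa [div_le_iff₀' (by positivity)] at hdecr

theorem integrable_sq_norm_gradient_comp [IsFiniteMeasure μ] (hL : 0 < L)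
    (hdiff : Differentiable ℝ f)
    (hsmooth : ∀ x y, ‖gradient f x - gradient f y‖ ≤ L * ‖x - y‖) {xstar : E}
    (hmin : ∀ y, f xstar ≤ f y) {X : Ω → E} (hX : AEStronglyMeasurable X μ)
    (hfX : Integrable (fun ω => f (X ω)) μ) :
    Integrable (fun ω => ‖gradient f (X ω)‖ ^ 2) μ :=
  integrable_of_le_of_le
    (((continuous_gradient_of_lipschitz hsmooth).comp_aestronglyMeasurable hX).norm.pow 2)
    (ae_of_all _ fun _ => sq_nonneg _)
    (ae_of_all _ fun ω => sq_norm_gradient_le hL hdiff hsmooth hmin (X ω))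
    (integrable_const 0) ((hfX.sub (integrable_const _)).const_mul (2 * L))

theorem integral_sq_norm_gradient_le [IsProbabilityMeasure μ] (hL : 0 < L)
    (hdiff : Differentiable ℝ f)
    (hsmooth : ∀ x y, ‖gradient f x - gradient f y‖ ≤ L * ‖x - y‖) {xstar : E}
    (hmin : ∀ y, f xstar ≤ f y) {X : Ω → E} (hX : AEStronglyMeasurable X μ)
    (hfX : Integrable (fun ω => f (X ω)) μ) :
    ∫ ω, ‖gradient f (X ω)‖ ^ 2 ∂μ ≤ 2 * L * (∫ ω, f (X ω) ∂μ - f xstar) :=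
  calc ∫ ω, ‖gradient f (X ω)‖ ^ 2 ∂μ ≤ ∫ ω, 2 * L * (f (X ω) - f xstar) ∂μ :=
        integral_mono (integrable_sq_norm_gradient_comp hL hdiff hsmooth hmin hX hfX)
          ((hfX.sub (integrable_const _)).const_mul _)
          fun ω => sq_norm_gradient_le hL hdiff hsmooth hmin (X ω)
    _ = 2 * L * (∫ ω, f (X ω) ∂μ - f xstar) := by
        rw [integral_const_mul, integral_sub hfX (integrable_const _), integral_const]
        simp

noncomputable def sgdStep (f : E → ℝ) (L σ : ℝ) (p w : E) : E :=
  p - (1 / L * gradWeight σ (gradient f p)) • (gradient f p + w)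

theorem continuous_sgdStep (hσ : σ ≠ 0) (hgrad : Continuous (gradient f)) :
    Continuous (Function.uncurry (sgdStep f L σ)) := by
  have := continuous_gradWeight (E := E) hσ
  unfold sgdStep Function.uncurry
  fun_prop

theorem apply_sgdStep_le (hL : L ≠ 0) (hσ : σ ≠ 0) (hdiff : Differentiable ℝ f)
    (hsmooth : ∀ x y, ‖gradient f x - gradient f y‖ ≤ L * ‖x - y‖) (p w : E) :
    f (sgdStep f L σ p w) ≤ f p
      - ⟪(gradWeight σ (gradient f p) * (1 - gradWeight σ (gradient f p)) / L) • gradient f p, w⟫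
      + gradWeight σ (gradient f p) ^ 2 / (2 * L) * (‖w‖ ^ 2 - σ ^ 2)
      - gradWeight σ (gradient f p) * ‖gradient f p‖ ^ 2 / (2 * L) := by
  have h := descent_lemma hdiff hsmooth p (sgdStep f L σ p w)
  rw [sgdStep, sub_sub_cancel_left, inner_neg_right, norm_neg, inner_smul_right, inner_add_right,
    real_inner_self_eq_norm_sq, norm_smul, mul_pow, norm_add_sq_real, Real.norm_eq_abs,
    sq_abs] at h
  rw [real_inner_smul_left]
  refine h.trans_eq ?_
  have hu := gradWeight_mul_add hσ (gradient f p)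
  field_simp
  linear_combination gradWeight σ (gradient f p) * hu

theorem apply_sgdStep_le_add (hL : 0 < L) (hσ : 0 < σ) (hdiff : Differentiable ℝ f)
    (hsmooth : ∀ x y, ‖gradient f x - gradient f y‖ ≤ L * ‖x - y‖) (p w : E) :
    f (sgdStep f L σ p w) ≤ f p + σ / (2 * L) * ‖w‖ + ‖w‖ ^ 2 / (2 * L) := by
  have h := apply_sgdStep_le hL.ne' hσ.ne' hdiff hsmooth p w
  set g := gradient f p
  set u := gradWeight σ g
  have hinner := neg_le_of_abs_le ((abs_real_inner_le_norm ((u * (1 - u) / L) • g) w).trans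
    (mul_le_mul_of_nonneg_right (norm_gradWeight_mul_one_sub_smul_le hL hσ g) (norm_nonneg w)))
  have hu2 : u ^ 2 ≤ 1 := pow_le_one₀ (gradWeight_nonneg σ g) (gradWeight_le_one σ g)
  have hnoise : u ^ 2 / (2 * L) * (‖w‖ ^ 2 - σ ^ 2) ≤ ‖w‖ ^ 2 / (2 * L) := by
    rw [div_mul_eq_mul_div]
    gcongr
    nlinarith [sq_nonneg σ, sq_nonneg ‖w‖, sq_nonneg u]
  have hdecr : 0 ≤ u * ‖g‖ ^ 2 / (2 * L) := by
    have := gradWeight_nonneg σ g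
    positivity
  linarith

theorem integrable_apply_sgdStep [IsFiniteMeasure μ] (hL : 0 < L) (hσ : 0 < σ)
    (hdiff : Differentiable ℝ f)
    (hsmooth : ∀ x y, ‖gradient f x - gradient f y‖ ≤ L * ‖x - y‖) {xstar : E}
    (hmin : ∀ y, f xstar ≤ f y) {p w : Ω → E} (hp : AEStronglyMeasurable p μ)
    (hfp : Integrable (fun ω => f (p ω)) μ) (hw : Integrable w μ)
    (hw2 : Integrable (fun ω => ‖w ω‖ ^ 2) μ) :
    Integrable (fun ω => f (sgdStep f L σ (p ω) (w ω))) μ :=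
  integrable_of_le_of_le
    (hdiff.continuous.comp_aestronglyMeasurable
      ((continuous_sgdStep hσ.ne' (continuous_gradient_of_lipschitz hsmooth)
        ).comp_aestronglyMeasurable₂ hp hw.1))
    (ae_of_all _ fun _ => hmin _)
    (ae_of_all _ fun ω => apply_sgdStep_le_add hL hσ hdiff hsmooth (p ω) (w ω))
    (integrable_const _) ((hfp.add (hw.norm.const_mul _)).add (hw2.div_const _))

theorem integral_apply_sgdStep_le [IsProbabilityMeasure μ] (hL : 0 < L) (hσ : 0 < σ)
    (hdiff : Differentiable ℝ f)
    (hsmooth : ∀ x y, ‖gradient f x - gradient f y‖ ≤ L * ‖x - y‖) {xstar : E}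
    (hmin : ∀ y, f xstar ≤ f y) (hm : m ≤ m0) {p w : Ω → E} (hp : StronglyMeasurable[m] p)
    (hfp : Integrable (fun ω => f (p ω)) μ) (hw : Integrable w μ)
    (hw2 : Integrable (fun ω => ‖w ω‖ ^ 2) μ) (hmean : μ[w|m] =ᵐ[μ] 0)
    (hvar : ∀ᵐ ω ∂μ, (μ[fun ω => ‖w ω‖ ^ 2|m]) ω ≤ σ ^ 2) :
    ∫ ω, f (sgdStep f L σ (p ω) (w ω)) ∂μ ≤ ∫ ω, f (p ω) ∂μ
      - (∫ ω, gradWeight σ (gradient f (p ω)) * ‖gradient f (p ω)‖ ^ 2 ∂μ) / (2 * L) := by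
  have hgrad := continuous_gradient_of_lipschitz hsmooth
  have hweight := continuous_gradWeight (E := E) hσ.ne'
  let u : E → ℝ := fun y => gradWeight σ (gradient f y)
  let v : Ω → E := fun ω => (u (p ω) * (1 - u (p ω)) / L) • gradient f (p ω)
  let h : Ω → ℝ := fun ω => u (p ω) ^ 2 / (2 * L)
  let φ : Ω → ℝ := fun ω => u (p ω) * ‖gradient f (p ω)‖ ^ 2
  have hv : StronglyMeasurable[m] v :=
    (by fun_prop : Continuous fun y => (u y * (1 - u y) / L) • gradient f y
      ).comp_stronglyMeasurable hp
  have hh : StronglyMeasurable[m] h :=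
    (by fun_prop : Continuous fun y => u y ^ 2 / (2 * L)).comp_stronglyMeasurable hp
  have hvC : ∀ ω, ‖v ω‖ ≤ σ / (2 * L) := fun ω => norm_gradWeight_mul_one_sub_smul_le hL hσ _
  have hh0 : ∀ ω, 0 ≤ h ω := fun ω => div_nonneg (sq_nonneg _) (by positivity)
  have hhC : ∀ ω, h ω ≤ 1 / (2 * L) := fun ω =>
    div_le_div_of_nonneg_right (pow_le_one₀ (gradWeight_nonneg σ _) (gradWeight_le_one σ _))
      (by positivity)
  have hinner : Integrable (fun ω => ⟪v ω, w ω⟫) μ :=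
    (innerSL ℝ).integrable_of_bilin_of_bdd_left _ (hv.mono hm).aestronglyMeasurable
      (ae_of_all _ hvC) hw
  have hnoise : Integrable (fun ω => h ω * (‖w ω‖ ^ 2 - σ ^ 2)) μ :=
    (hw2.sub (integrable_const _)).bdd_mul (hh.mono hm).aestronglyMeasurable
      (ae_of_all _ fun ω => (Real.norm_of_nonneg (hh0 ω)).trans_le (hhC ω))
  have hφ : Integrable φ μ :=
    integrable_gradWeight_mul_sq_norm hσ.ne'
      (hgrad.comp_aestronglyMeasurable (hp.mono hm).aestronglyMeasurable)
      (integrable_sq_norm_gradient_comp hL hdiff hsmooth hmin (hp.mono hm).aestronglyMeasurable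
        hfp)
  calc ∫ ω, f (sgdStep f L σ (p ω) (w ω)) ∂μ
      ≤ ∫ ω, (f (p ω) - ⟪v ω, w ω⟫ + h ω * (‖w ω‖ ^ 2 - σ ^ 2) - φ ω / (2 * L)) ∂μ :=
        integral_mono (integrable_apply_sgdStep hL hσ hdiff hsmooth hmin
          (hp.mono hm).aestronglyMeasurable hfp hw hw2)
          (((hfp.sub hinner).add hnoise).sub (hφ.div_const _))
          fun ω => apply_sgdStep_le hL.ne' hσ.ne' hdiff hsmooth (p ω) (w ω)
    _ = ∫ ω, f (p ω) ∂μ - ∫ ω, ⟪v ω, w ω⟫ ∂μ + ∫ ω, h ω * (‖w ω‖ ^ 2 - σ ^ 2) ∂μ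
          - (∫ ω, φ ω ∂μ) / (2 * L) := by
        rw [integral_sub (f := fun ω => f (p ω) - ⟪v ω, w ω⟫ + h ω * (‖w ω‖ ^ 2 - σ ^ 2))
            ((hfp.sub hinner).add hnoise) (hφ.div_const _),
          integral_add (f := fun ω => f (p ω) - ⟪v ω, w ω⟫) (hfp.sub hinner) hnoise,
          integral_sub hfp hinner, integral_div]
    _ ≤ _ := by
        rw [integral_inner_eq_zero_of_condExp_eq_zero hm hv hvC hw hmean, sub_zero]
        linarith [integral_mul_sub_nonpos_of_condExp_le hm hh hh0 hhC hw2 hvar]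

theorem sgd_telescoping [IsProbabilityMeasure μ] (hL : 0 < L) (hσ : 0 < σ)
    (hdiff : Differentiable ℝ f)
    (hsmooth : ∀ x y, ‖gradient f x - gradient f y‖ ≤ L * ‖x - y‖) {xstar : E}
    (hmin : ∀ y, f xstar ≤ f y) (F : Filtration ℕ m0) {T : ℕ} {x ξ : ℕ → Ω → E} {x₀ : E}
    (hξint : ∀ t, Integrable (ξ t) μ) (hξint2 : ∀ t, Integrable (fun ω => ‖ξ t ω‖ ^ 2) μ)
    (hx0 : ∀ ω, x 0 ω = x₀)
    (hadapted : ∀ t, 1 ≤ t → t ≤ T → StronglyMeasurable[F (t - 1)] (x (t - 1)))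
    (hmean : ∀ t, 1 ≤ t → t ≤ T → μ[ξ t|F (t - 1)] =ᵐ[μ] 0)
    (hvar : ∀ t, 1 ≤ t → t ≤ T →
      ∀ᵐ ω ∂μ, (μ[fun ω' => ‖ξ t ω'‖ ^ 2|F (t - 1)]) ω ≤ σ ^ 2)
    (hupdate : ∀ t, 1 ≤ t → t ≤ T → ∀ ω, x t ω = sgdStep f L σ (x (t - 1) ω) (ξ t ω)) :
    ∀ t ≤ T, AEStronglyMeasurable (x t) μ ∧ Integrable (fun ω => f (x t ω)) μ ∧
      ∫ ω, f (x t ω) ∂μ + (∑ s ∈ Finset.range t,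
        ∫ ω, gradWeight σ (gradient f (x s ω)) * ‖gradient f (x s ω)‖ ^ 2 ∂μ) / (2 * L)
        ≤ f x₀ := by
  intro t ht
  induction t with
  | zero => simp [funext hx0, aestronglyMeasurable_const]
  | succ n ih =>
    obtain ⟨-, hfn, hsum⟩ := ih (by omega)
    have hxn : StronglyMeasurable[F n] (x n) := hadapted (n + 1) (by omega) ht
    have hdecr := integral_apply_sgdStep_le hL hσ hdiff hsmooth hmin (F.le n) hxn hfn
      (hξint _) (hξint2 _) (hmean (n + 1) (by omega) ht) (hvar (n + 1) (by omega) ht)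
    have hstep : x (n + 1) = fun ω => sgdStep f L σ (x n ω) (ξ (n + 1) ω) :=
      funext (hupdate (n + 1) (by omega) ht)
    rw [hstep]
    refine ⟨(continuous_sgdStep hσ.ne' (continuous_gradient_of_lipschitz hsmooth)
        ).comp_aestronglyMeasurable₂ (hxn.mono (F.le n)).aestronglyMeasurable (hξint _).1,
      integrable_apply_sgdStep hL hσ hdiff hsmooth hmin (hxn.mono (F.le n)).aestronglyMeasurable
        hfn (hξint _) (hξint2 _), ?_⟩
    rw [Finset.sum_range_succ, add_div]
    linarith

end SGD

theorem exists_le_of_add_sum_le {T : ℕ} (hT : 1 ≤ T) {σ c : ℝ} (hσ : 0 ≤ σ) {g b : ℕ → ℝ}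
    (hb : ∀ s, 0 ≤ b s) (hgb : ∀ t, 1 ≤ t → t ≤ T → g t ≤ b t + σ * √(b t))
    (hsum : g T + ∑ s ∈ Finset.range T, b s ≤ c) :
    ∃ t, 1 ≤ t ∧ t ≤ T ∧ g t ≤ c / T + σ * √(c / T) := by
  by_contra! hlt
  set ε := c / T
  have hbε : ∀ s ∈ Finset.Ico 1 T, ε < b s := by
    intro s hs
    obtain ⟨h1, h2⟩ := Finset.mem_Ico.1 hs
    by_contra! hle
    have : b s + σ * √(b s) ≤ ε + σ * √ε := by gcongr
    linarith [hgb s h1 h2.le, hlt s h1 h2.le]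
  have hgT : ε < g T := by
    have := hlt T hT le_rfl
    nlinarith [Real.sqrt_nonneg ε]
  have hsumb : (T - 1 : ℝ) * ε ≤ ∑ s ∈ Finset.range T, b s :=
    calc (T - 1 : ℝ) * ε = ∑ s ∈ Finset.Ico 1 T, ε := by simp [Nat.cast_sub hT]
      _ ≤ ∑ s ∈ Finset.Ico 1 T, b s := Finset.sum_le_sum fun s hs => (hbε s hs).le
      _ ≤ ∑ s ∈ Finset.range T, b s :=
        Finset.sum_le_sum_of_subset_of_nonneg (fun s hs => by
          simp only [Finset.mem_Ico, Finset.mem_range] at hs ⊢; omega)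
          fun s _ _ => hb s
  have hTε : (T : ℝ) * ε = c := mul_div_cancel₀ c (by positivity)
  linarith

theorem stmt_2_general {d : ℕ} {f : EuclideanSpace ℝ (Fin d) → ℝ} {L R σ : ℝ}
    (hL : 0 < L) (hσ : 0 < σ)
    (hdiff : Differentiable ℝ f)
    (hsmooth : ∀ x y, ‖gradient f x - gradient f y‖ ≤ L * ‖x - y‖)
    (xstar : EuclideanSpace ℝ (Fin d)) (hmin : ∀ y, f xstar ≤ f y)
    {Ω : Type*} {m0 : MeasurableSpace Ω} {μ : Measure Ω} [IsProbabilityMeasure μ]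
    (F : Filtration ℕ m0)
    (T : ℕ) (hT : 1 ≤ T)
    (x : ℕ → Ω → EuclideanSpace ℝ (Fin d))
    (ξ : ℕ → Ω → EuclideanSpace ℝ (Fin d))
    (hξint : ∀ t, Integrable (ξ t) μ)
    (hξint2 : ∀ t, Integrable (fun ω => ‖ξ t ω‖ ^ 2) μ)
    (x₀ : EuclideanSpace ℝ (Fin d)) (hx0 : ∀ ω, x 0 ω = x₀)
    (hR : |f x₀ - f xstar| ≤ R)
    (hadapted : ∀ t, 1 ≤ t → t ≤ T → StronglyMeasurable[F (t - 1)] (x (t - 1)))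
    (hmean : ∀ t, 1 ≤ t → t ≤ T → μ[ξ t|F (t - 1)] =ᵐ[μ] 0)
    (hvar : ∀ t, 1 ≤ t → t ≤ T →
      ∀ᵐ ω ∂μ, (μ[fun ω' => ‖ξ t ω'‖ ^ 2|F (t - 1)]) ω ≤ σ ^ 2)
    (hupdate : ∀ t, 1 ≤ t → t ≤ T → ∀ ω,
      x t ω = x (t - 1) ω -
        ((1 / L) * (‖gradient f (x (t - 1) ω)‖ ^ 2 /
            (‖gradient f (x (t - 1) ω)‖ ^ 2 + σ ^ 2))) •
          (gradient f (x (t - 1) ω) + ξ t ω)) :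
    ∃ t, 1 ≤ t ∧ t ≤ T ∧
      ∫ ω, ‖gradient f (x t ω)‖ ^ 2 ∂μ ≤
        2 * L * R / T + σ * Real.sqrt (2 * L * R / T) := by
  set φ : ℕ → ℝ := fun s =>
    ∫ ω, gradWeight σ (gradient f (x s ω)) * ‖gradient f (x s ω)‖ ^ 2 ∂μ
  have hrun := sgd_telescoping hL hσ hdiff hsmooth hmin F hξint hξint2 hx0 hadapted hmean hvar
    hupdate
  refine exists_le_of_add_sum_le hT hσ.le (b := φ)
    (fun s => integral_nonneg fun ω => mul_nonneg (gradWeight_nonneg σ _) (sq_nonneg _))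
    (fun t _ ht => integral_sq_norm_le_add_sqrt hσ
      ((continuous_gradient_of_lipschitz hsmooth).comp_aestronglyMeasurable (hrun t ht).1)
      (integrable_sq_norm_gradient_comp hL hdiff hsmooth hmin (hrun t ht).1 (hrun t ht).2.1)) ?_
  obtain ⟨hxT, hfT, hrunT⟩ := hrun T le_rfl
  have hgradT := integral_sq_norm_gradient_le hL hdiff hsmooth hmin hxT hfT
  have hsumT : ∑ s ∈ Finset.range T, φ s ≤ 2 * L * (f x₀ - ∫ ω, f (x T ω) ∂μ) :=
    (div_le_iff₀' (by positivity)).1 (by linarith)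
  have hR' : 2 * L * (f x₀ - f xstar) ≤ 2 * L * R := by
    gcongr
    exact (le_abs_self _).trans hR
  linarith

/-- SGD with the deterministic-in-the-gradient step size
`ηₜ = (1/L)·‖∇f(x_{t-1})‖²/(‖∇f(x_{t-1})‖² + σ²)` applied to the stochastic gradient
`gₜ = ∇f(x_{t-1}) + ξₜ` (zero conditional mean, conditional second moment `≤ σ²`),
on an `L`-smooth `f` with `|f(x₀) - f(x*)| ≤ R` for a global minimizer `x*`, satisfies
`min_{t=1..T} E[‖∇f(xₜ)‖²] ≤ 2LR/T + σ√(2LR/T)`. -/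
theorem stmt_2 {d : ℕ} {f : EuclideanSpace ℝ (Fin d) → ℝ} {L R σ : ℝ}
    (hL : 0 < L) (hσ : 0 < σ)
    (hdiff : Differentiable ℝ f)
    (hsmooth : ∀ x y, ‖gradient f x - gradient f y‖ ≤ L * ‖x - y‖)
    (xstar : EuclideanSpace ℝ (Fin d)) (hmin : ∀ y, f xstar ≤ f y)
    {Ω : Type*} {m0 : MeasurableSpace Ω} {μ : Measure Ω} [IsProbabilityMeasure μ]
    (F : Filtration ℕ m0)
    (T : ℕ) (hT : 1 ≤ T)
    (x : ℕ → Ω → EuclideanSpace ℝ (Fin d))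
    (ξ : ℕ → Ω → EuclideanSpace ℝ (Fin d))
    (hξmeas : ∀ t, Measurable (ξ t))
    (hξint : ∀ t, Integrable (ξ t) μ)
    (hξint2 : ∀ t, Integrable (fun ω => ‖ξ t ω‖ ^ 2) μ)
    (x₀ : EuclideanSpace ℝ (Fin d)) (hx0 : ∀ ω, x 0 ω = x₀)
    (hR : |f x₀ - f xstar| ≤ R)
    (hadapted : ∀ t, 1 ≤ t → t ≤ T → StronglyMeasurable[F (t - 1)] (x (t - 1)))
    (hmean : ∀ t, 1 ≤ t → t ≤ T → μ[ξ t|F (t - 1)] =ᵐ[μ] 0)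
    (hvar : ∀ t, 1 ≤ t → t ≤ T →
      ∀ᵐ ω ∂μ, (μ[fun ω' => ‖ξ t ω'‖ ^ 2|F (t - 1)]) ω ≤ σ ^ 2)
    (hupdate : ∀ t, 1 ≤ t → t ≤ T → ∀ ω,
      x t ω = x (t - 1) ω -
        ((1 / L) * (‖gradient f (x (t - 1) ω)‖ ^ 2 /
            (‖gradient f (x (t - 1) ω)‖ ^ 2 + σ ^ 2))) •
          (gradient f (x (t - 1) ω) + ξ t ω)) :
    ∃ t, 1 ≤ t ∧ t ≤ T ∧
      ∫ ω, ‖gradient f (x t ω)‖ ^ 2 ∂μ ≤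
        2 * L * R / T + σ * Real.sqrt (2 * L * R / T) :=
  stmt_2_general hL hσ hdiff hsmooth xstar hmin F T hT x ξ hξint hξint2 x₀ hx0 hR hadapted hmean
    hvar hupdate
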